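/- Let F satisfy F(k+m) = λ_K(k,m)·F(k) + λ_M(k,m)·F(m) for all k, m ≥ 1, with λ_K, λ_M taking values in ℕ. Then for any composition b₁ + ... + b_k = n into positive parts, the multi F-nomial coefficient satisfies the recurrence C_F(n; b_1,...,b_k) = Σ_{s=1}^{k} λ_s(β)·C_F(n−1; b_1,...,b_{s-1}, b_s − 1, b_{s+1},...,b_k), where λ_s(β) = λ_K(b_s, Σ_{i>s} b_i)·∏_{i<s} λ_M(b_i, Σ_{j>i} b_j) (interpreting λ_K(·,0) = 1), stated as an identity over ℚ (or assuming all multi F-nomial coefficients are integers). -/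

import Mathlib

/-- The F-factorial. -/
def Ffact (F : ℕ → ℕ) (n : ℕ) : ℕ := ∏ i ∈ Finset.range n, F (i + 1)

/-!
Writing `n = b₁ + (b₂ + ⋯ + b_k)` and applying the `T_λ` relation repeatedly, peeling off one
part at a time, gives `F(n) = Σ_s λ_s(β) F(b_s)`. Multiplying by `(n-1)!_F / ∏ (b_i)!_F`
and using `(b_s)!_F = F(b_s) (b_s - 1)!_F` turns the `s`-th term into
`λ_s(β) C_F(n-1; b₁, …, b_s - 1, …, b_k)`.
-/

open Finset

theorem Ffact_succ (F : ℕ → ℕ) (m : ℕ) : Ffact F (m + 1) = Ffact F m * F (m + 1) :=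
  prod_range_succ _ _

theorem Ffact_eq_mul_Ffact_sub_one (F : ℕ → ℕ) {m : ℕ} (hm : 1 ≤ m) :
    Ffact F m = F m * Ffact F (m - 1) := by
  obtain ⟨m, rfl⟩ := Nat.exists_eq_add_of_le' hm
  rw [Ffact_succ, Nat.add_sub_cancel, mul_comm]

theorem mul_prod_Ffact_update_sub_one (F : ℕ → ℕ) {k : ℕ} (b : Fin k → ℕ) {s : Fin k}
    (hs : 1 ≤ b s) :
    F (b s) * ∏ i, Ffact F (if i = s then b i - 1 else b i) = ∏ i, Ffact F (b i) := by
  rw [← mul_prod_erase _ _ (mem_univ s), ← mul_prod_erase _ _ (mem_univ s), if_pos rfl,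
    Ffact_eq_mul_Ffact_sub_one F hs, mul_assoc]
  congr 2
  exact prod_congr rfl fun i hi => by rw [if_neg (ne_of_mem_erase hi)]

section Coefficients

variable {k : ℕ}

def tailSum (b : Fin k → ℕ) (s : Fin k) : ℕ := ∑ i ∈ Ioi s, b i

/-- The coefficient `λ_s(β)`, with `λ_K(·, 0)` read as `1`. -/
def lamCoef (lamK lamM : ℕ → ℕ → ℕ) (b : Fin k → ℕ) (s : Fin k) : ℕ :=
  (if tailSum b s = 0 then 1 else lamK (b s) (tailSum b s)) *
    ∏ i ∈ Iio s, lamM (b i) (tailSum b i)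

theorem tailSum_zero (b : Fin (k + 1) → ℕ) : tailSum b 0 = ∑ i, Fin.tail b i :=
  Fin.sum_Ioi_zero b

theorem tailSum_succ (b : Fin (k + 1) → ℕ) (s : Fin k) :
    tailSum b s.succ = tailSum (Fin.tail b) s :=
  Fin.sum_Ioi_succ b s

theorem Fin.prod_Iio_succ {M : Type*} [CommMonoid M] (f : Fin (k + 1) → M) (s : Fin k) :
    ∏ i ∈ Iio s.succ, f i = f 0 * ∏ i ∈ Iio s, f i.succ := by
  simp only [← filter_gt_eq_Iio, prod_filter, Fin.prod_univ_succ, Fin.succ_pos, if_true,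
    Fin.succ_lt_succ_iff]

variable (lamK lamM : ℕ → ℕ → ℕ)

theorem lamCoef_fin_one (b : Fin 1 → ℕ) : lamCoef lamK lamM b 0 = 1 := by
  simp [lamCoef, tailSum]

theorem lamCoef_zero (b : Fin (k + 1) → ℕ) (h : tailSum b 0 ≠ 0) :
    lamCoef lamK lamM b 0 = lamK (b 0) (tailSum b 0) := by
  simp [lamCoef, h, ← filter_gt_eq_Iio]

theorem lamCoef_succ (b : Fin (k + 1) → ℕ) (s : Fin k) :
    lamCoef lamK lamM b s.succ =
      lamM (b 0) (tailSum b 0) * lamCoef lamK lamM (Fin.tail b) s := by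
  simp only [lamCoef, Fin.prod_Iio_succ, tailSum_succ, Fin.tail]
  ring

variable {lamK lamM} {F : ℕ → ℕ}

theorem apply_sum_eq_sum_lamCoef_mul
    (hF : ∀ k m, 1 ≤ k → 1 ≤ m → F (k + m) = lamK k m * F k + lamM k m * F m) :
    ∀ {k : ℕ} (b : Fin (k + 1) → ℕ), (∀ i, 1 ≤ b i) →
      F (∑ i, b i) = ∑ s, lamCoef lamK lamM b s * F (b s)
  | 0, b, _ => by simp [lamCoef_fin_one]
  | k + 1, b, hb => by
    have htail : 1 ≤ tailSum b 0 := by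
      rw [tailSum_zero]
      exact (hb 1).trans
        (single_le_sum (f := Fin.tail b) (fun _ _ => Nat.zero_le _) (mem_univ 0))
    have ih : F (tailSum b 0) = ∑ s, lamCoef lamK lamM (Fin.tail b) s * F (Fin.tail b s) := by
      rw [tailSum_zero]
      exact apply_sum_eq_sum_lamCoef_mul hF (Fin.tail b) fun i => hb i.succ
    calc F (∑ i, b i)
        = F (b 0 + tailSum b 0) := by rw [Fin.sum_univ_succ, tailSum_zero]; rfl
      _ = lamK (b 0) (tailSum b 0) * F (b 0) + lamM (b 0) (tailSum b 0) * F (tailSum b 0) :=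
        hF _ _ (hb 0) htail
      _ = ∑ s, lamCoef lamK lamM b s * F (b s) := by
        rw [ih, Fin.sum_univ_succ (f := fun s => lamCoef lamK lamM b s * F (b s)),
          lamCoef_zero _ _ _ (Nat.one_le_iff_ne_zero.mp htail), mul_sum]
        simp only [lamCoef_succ, mul_assoc]
        rfl

end Coefficients

theorem multi_Fnomial_recurrence_general (F : ℕ → ℕ) (hpos : ∀ n, 1 ≤ n → 1 ≤ F n)
    (lamK lamM : ℕ → ℕ → ℕ)
    (h : ∀ k m, 1 ≤ k → 1 ≤ m →
      F (k + m) = lamK k m * F k + lamM k m * F m)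
    (k : ℕ) (b : Fin k → ℕ) (hb : ∀ i, 1 ≤ b i)
    (n : ℕ) (hn : 1 ≤ n) (hsum : ∑ i, b i = n) :
    (Ffact F n : ℚ) / ∏ i, (Ffact F (b i) : ℚ) =
      ∑ s : Fin k,
        (((if (∑ i ∈ Finset.univ.filter (fun i => s < i), b i) = 0 then 1
            else lamK (b s) (∑ i ∈ Finset.univ.filter (fun i => s < i), b i)) *
          ∏ i ∈ Finset.univ.filter (fun i => i < s),
            lamM (b i) (∑ j ∈ Finset.univ.filter (fun j => i < j), b j) : ℕ) : ℚ) *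
          ((Ffact F (n - 1) : ℚ) /
            ∏ i, (Ffact F (if i = s then b i - 1 else b i) : ℚ)) := by
  obtain ⟨k, rfl⟩ : ∃ k', k = k' + 1 :=
    Nat.exists_eq_succ_of_ne_zero (by rintro rfl; simp [← hsum] at hn)
  have hkey := apply_sum_eq_sum_lamCoef_mul h b hb
  rw [hsum] at hkey
  have hFb : ∀ s, (F (b s) : ℚ) ≠ 0 := fun s =>
    Nat.cast_ne_zero.mpr (Nat.one_le_iff_ne_zero.mp (hpos _ (hb s)))
  simp only [filter_lt_eq_Ioi, filter_gt_eq_Iio]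
  calc (Ffact F n : ℚ) / ∏ i, (Ffact F (b i) : ℚ)
      = ∑ s, (lamCoef lamK lamM b s : ℚ) *
          (F (b s) * Ffact F (n - 1) / ∏ i, (Ffact F (b i) : ℚ)) := by
        rw [Ffact_eq_mul_Ffact_sub_one F hn, hkey]
        push_cast
        rw [sum_mul, sum_div]
        exact sum_congr rfl fun s _ => by ring
    _ = _ := sum_congr rfl fun s _ => by
        rw [← Nat.cast_prod, ← mul_prod_Ffact_update_sub_one F b (hb s), Nat.cast_mul,
          Nat.cast_prod, mul_div_mul_left _ _ (hFb s)]
        rfl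

/-- For `F ∈ T_λ`, the multi F-nomial coefficients satisfy the recurrence
`C_F(n; b₁,...,b_k) = Σ_s λ_s(β)·C_F(n−1; b₁,...,b_s − 1,...,b_k)`, stated over `ℚ`. -/
theorem multi_Fnomial_recurrence (F : ℕ → ℕ) (hpos : ∀ n, 1 ≤ n → 1 ≤ F n)
    (lamK lamM : ℕ → ℕ → ℕ)
    (h : ∀ k m, 1 ≤ k → 1 ≤ m →
      F (k + m) = lamK k m * F k + lamM k m * F m)
    (k : ℕ) (hk : 1 ≤ k) (b : Fin k → ℕ) (hb : ∀ i, 1 ≤ b i)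
    (n : ℕ) (hn : 1 ≤ n) (hsum : ∑ i, b i = n) :
    (Ffact F n : ℚ) / ∏ i, (Ffact F (b i) : ℚ) =
      ∑ s : Fin k,
        (((if (∑ i ∈ Finset.univ.filter (fun i => s < i), b i) = 0 then 1
            else lamK (b s) (∑ i ∈ Finset.univ.filter (fun i => s < i), b i)) *
          ∏ i ∈ Finset.univ.filter (fun i => i < s),
            lamM (b i) (∑ j ∈ Finset.univ.filter (fun j => i < j), b j) : ℕ) : ℚ) *
          ((Ffact F (n - 1) : ℚ) /
            ∏ i, (Ffact F (if i = s then b i - 1 else b i) : ℚ)) :=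
  multi_Fnomial_recurrence_general F hpos lamK lamM h k b hb n hn hsum
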